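/- For every z ∈ ℤ, the absolute value of the determinant of the d×d matrix whose i-th row (i = 1,...,d) is B_{z+i} − B_z ∈ ℝ^d equals d·|p| times the absolute value of the determinant of the (d−1)×(d−1) matrix whose i-th row (i = 1,...,d−1) is A_i − A_0 ∈ ℝ^{d−1}. -/

import Mathlib

/-- The point `B_j = (A_{j mod d}, j·p) ∈ ℝ^{d−1} × ℝ ≅ ℝ^d`: the first `d−1`
coordinates are those of `A_{j mod d}` and the last coordinate is `j·p`. -/
noncomputable def Bpt (d : ℕ) (A : Fin d → Fin (d - 1) → ℝ) (p : ℝ) (j : ℤ) :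
    Fin d → ℝ :=
  fun i =>
    if h : (i : ℕ) < d - 1 then
      A ⟨(j % (d : ℤ)).toNat, by
        have h1 := i.isLt
        have h2 : (0 : ℤ) < (d : ℤ) := by omega
        have h3 := Int.emod_lt_of_pos j h2
        have h4 := Int.emod_nonneg j (ne_of_gt h2)
        omega⟩ ⟨(i : ℕ), h⟩
    else (j : ℝ) * p

/-- The simplex `L_z = conv{B_z, B_{z+1}, …, B_{z+d}} ⊂ ℝ^d`. -/
noncomputable def Lsimp (d : ℕ) (A : Fin d → Fin (d - 1) → ℝ) (p : ℝ) (z : ℤ) :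
    Set (Fin d → ℝ) :=
  convexHull ℝ (Set.range fun i : Fin (d + 1) => Bpt d A p (z + (i : ℕ)))

/-!
Write `d = n + 1`. Since `B_{z+d}` and `B_z` share their first `n` coordinates, the last row of the
matrix is `(0, …, 0, d p)`, so expanding along it leaves `d p` times the minor with rows
`A_{z+i} − A_z` (indices mod `d`). Bordering each point `A_k` with a leading `1` turns that minor
into a determinant whose rows are the bordered points, so relabelling the points by `k ↦ z + k`
only changes its sign.
-/

open Matrix Equiv
open scoped Fin.CommRing

namespace Matrix

variable {R : Type*} [CommRing R]

theorem det_eq_mul_det_submatrix_castSucc_of_last_row {n : ℕ}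
    (M : Matrix (Fin (n + 1)) (Fin (n + 1)) R) (h : ∀ j : Fin n, M (Fin.last n) j.castSucc = 0) :
    M.det = M (Fin.last n) (Fin.last n) * (M.submatrix Fin.castSucc Fin.castSucc).det := by
  rw [det_succ_row M (Fin.last n), Fin.sum_univ_castSucc]
  simp [h, Fin.succAbove_last, ← two_mul, pow_mul]

theorem det_cons_one_eq_det_sub {n : ℕ} (A : Fin (n + 1) → Fin n → R) :
    (of fun i => Fin.cons (1 : R) (A i)).det = (of fun i : Fin n => A i.succ - A 0).det := by
  rw [det_eq_of_forall_row_eq_smul_add_const (fun i => if i = 0 then 0 else 1) 0 (by simp)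
    (B := of (Fin.cons (Fin.cons 1 (A 0)) fun i => Fin.cons 0 (A i.succ - A 0)))]
  · rw [det_succ_column_zero, Fin.sum_univ_succ, Finset.sum_eq_zero fun i _ => by simp]
    simp only [Fin.val_zero, pow_zero, one_mul, add_zero, of_apply, Fin.cons_zero,
      Fin.succAbove_zero]
    congr 1
  · intro i j
    cases i using Fin.cases <;> cases j using Fin.cases <;> simp [Fin.succ_ne_zero]

theorem det_sub_comp_perm {n : ℕ} (A : Fin (n + 1) → Fin n → R) (σ : Perm (Fin (n + 1))) :
    (of fun i : Fin n => A (σ i.succ) - A (σ 0)).det =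
      σ.sign * (of fun i : Fin n => A i.succ - A 0).det := by
  rw [← det_cons_one_eq_det_sub (fun i => A (σ i)), ← det_cons_one_eq_det_sub A, ← det_permute]
  rfl

end Matrix

theorem Bpt_castSucc {n : ℕ} (A : Fin (n + 1) → Fin n → ℝ) (p : ℝ) (j : ℤ) (k : Fin n) :
    Bpt (n + 1) A p j k.castSucc = A (j : Fin (n + 1)) k := by
  rw [Bpt, dif_pos (show (k.castSucc : ℕ) < n + 1 - 1 from k.isLt)]
  congr 1
  exact Fin.ext (Fin.val_intCast j).symm

theorem Bpt_last {n : ℕ} (A : Fin (n + 1) → Fin n → ℝ) (p : ℝ) (j : ℤ) :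
    Bpt (n + 1) A p j (Fin.last n) = j * p := by
  simp [Bpt]

/-- The absolute determinant of the `d×d` matrix with rows `B_{z+i} − B_z`
(`i = 1,…,d`) equals `d·|p|` times the absolute determinant of the
`(d−1)×(d−1)` matrix with rows `A_i − A_0` (`i = 1,…,d−1`). -/
theorem stmt14 (d : ℕ) (hd : 2 ≤ d) (A : Fin d → Fin (d - 1) → ℝ) (p : ℝ) (z : ℤ) :
    |(Matrix.of fun i : Fin d =>
        Bpt d A p (z + (i : ℕ) + 1) - Bpt d A p z).det| =
      (d : ℝ) * |p| * |(Matrix.of fun i : Fin (d - 1) =>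
        A ⟨(i : ℕ) + 1, by have := i.isLt; omega⟩ - A ⟨0, by omega⟩).det| := by
  obtain ⟨n, rfl⟩ : ∃ n, d = n + 1 := ⟨d - 1, by omega⟩
  set M := of fun i : Fin (n + 1) => Bpt (n + 1) A p (z + (i : ℕ) + 1) - Bpt (n + 1) A p z
  set σ := Equiv.addLeft (z : Fin (n + 1))
  have h_last_row : ∀ k : Fin n, M (Fin.last n) k.castSucc = 0 := by
    intro k
    simp only [M, of_apply, Pi.sub_apply, Bpt_castSucc, Fin.val_last, add_assoc, Int.cast_add]
    simp
  have h_corner : M (Fin.last n) (Fin.last n) = (n + 1) * p := by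
    simp only [M, of_apply, Pi.sub_apply, Bpt_last, Fin.val_last]
    push_cast
    ring
  have h_minor : M.submatrix Fin.castSucc Fin.castSucc =
      of fun i : Fin n => A (σ i.succ) - A (σ 0) := by
    ext i k
    simp only [M, σ, submatrix_apply, of_apply, Pi.sub_apply, Bpt_castSucc, coe_addLeft,
      add_zero, Fin.val_castSucc, add_assoc, Int.cast_add]
    simp
  rw [det_eq_mul_det_submatrix_castSucc_of_last_row M h_last_row, h_corner, h_minor,
    det_sub_comp_perm, abs_mul, abs_mul, abs_mul, abs_unit_intCast, one_mul,
    abs_of_pos (by positivity : (0 : ℝ) < n + 1)]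
  push_cast
  rfl
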